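/- arXiv:2510.09442 — 3 statements merged into one kernel-verified Lean document; each statement's English description precedes it below -/
import Mathlib

section
/- Let V be a real Hilbert space, a : V × V → ℝ a bounded coercive bilinear form, q : V → ℝ^N a surjective continuous linear map, W := ker q, and Ṽ := {v ∈ V : a(v,w) = 0 for all w ∈ W}. Then the restriction of q to Ṽ is a linear bijection from Ṽ onto ℝ^N. In particular, for every i ∈ {1,…,N} there exists a unique φ_i ∈ Ṽ with q(φ_i) = e_i (the i-th standard basis vector of ℝ^N), the family (φ_1,…,φ_N) is a basis of Ṽ, and every v ∈ Ṽ satisfies v = Σ_{i=1}^N q_i(v) φ_i. -/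
/-!
Coercivity makes `V` the direct sum of `Ṽ` and `W = ker q`. The intersection is trivial because
`a v v = 0` forces `v = 0`. Every `v` splits as `(v - w) + w`, where `w ∈ W` is the Galerkin
solution of `a w k = a v k` for all `k ∈ W`: it exists by Lax–Milgram on the closed, hence
complete, subspace `W`. A complement of the kernel of a surjection is mapped bijectively onto
the target, so the preimages in `Ṽ` of the standard basis vectors form a basis of `Ṽ`.
-/

open Set LinearMap

section LinearAlgebra

variable {R M N : Type*} [CommRing R] [AddCommGroup M] [Module R M] [AddCommGroup N] [Module R N]

theorem Submodule.disjoint_orthogonalBilin_flip {a : M →ₗ[R] M →ₗ[R] R}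
    (ha : ∀ v, a v v = 0 → v = 0) (K : Submodule R M) :
    Disjoint (K.orthogonalBilin a.flip) K :=
  Submodule.disjoint_def.2 fun v hv hvK => ha v (hv v hvK)

theorem LinearMap.bijOn_of_isCompl_ker {f : M →ₗ[R] N} (hf : Function.Surjective f)
    {p : Submodule R M} (hp : IsCompl p (ker f)) : BijOn f p univ := by
  refine ⟨mapsTo_univ _ _, injOn_of_disjoint_ker subset_rfl hp.disjoint, ?_⟩
  have hmap : p.map f = ⊤ := (map_eq_top_iff (range_eq_top.2 hf)).2 hp.codisjoint.eq_top
  rw [SurjOn, ← Submodule.map_coe, hmap, Submodule.top_coe]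

theorem LinearMap.eq_sum_repr_smul_of_injOn {ι : Type*} [Fintype ι] {f : M →ₗ[R] N}
    {p : Submodule R M} (hf : InjOn f p) (b : Module.Basis ι R N) {φ : ι → M}
    (hφp : ∀ i, φ i ∈ p) (hfφ : ∀ i, f (φ i) = b i) {v : M} (hv : v ∈ p) :
    v = ∑ i, b.repr (f v) i • φ i := by
  refine hf hv (sum_mem fun i _ => p.smul_mem _ (hφp i)) ?_
  simp only [map_sum, map_smul, hfφ, b.sum_repr]

end LinearAlgebra

section LaxMilgram

variable {V : Type*} [NormedAddCommGroup V] [InnerProductSpace ℝ V]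

theorem IsCoercive.bilinearComp_subtypeL {B : V →L[ℝ] V →L[ℝ] ℝ} (hB : IsCoercive B)
    (K : Submodule ℝ V) : IsCoercive (B.bilinearComp K.subtypeL K.subtypeL) := by
  obtain ⟨c, hc, hBc⟩ := hB
  exact ⟨c, hc, fun u => hBc u⟩

theorem IsCoercive.exists_forall_apply_eq [CompleteSpace V] {B : V →L[ℝ] V →L[ℝ] ℝ}
    (hB : IsCoercive B) (f : StrongDual ℝ V) : ∃ u, ∀ w, B u w = f w := by
  refine ⟨hB.continuousLinearEquivOfBilin.symm ((InnerProductSpace.toDual ℝ V).symm f), fun w => ?_⟩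
  rw [← hB.continuousLinearEquivOfBilin_apply, ContinuousLinearEquiv.apply_symm_apply,
    InnerProductSpace.toDual_symm_apply]

theorem IsCoercive.exists_mem_forall_apply_sub_eq_zero {B : V →L[ℝ] V →L[ℝ] ℝ}
    (hB : IsCoercive B) (K : Submodule ℝ V) [CompleteSpace K] (v : V) :
    ∃ w ∈ K, ∀ k ∈ K, B (v - w) k = 0 := by
  obtain ⟨w, hw⟩ := (hB.bilinearComp_subtypeL K).exists_forall_apply_eq ((B v).comp K.subtypeL)
  refine ⟨w, w.2, fun k hk => ?_⟩
  simpa [sub_eq_zero] using (hw ⟨k, hk⟩).symm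

/-- `K.orthogonalBilin a.flip = {v | ∀ w ∈ K, a v w = 0}`: Mathlib's complement puts `K` in the
first slot of the form, hence the `flip`. -/
theorem isCompl_orthogonalBilin_flip_of_bounded_of_coercive (a : V →ₗ[ℝ] V →ₗ[ℝ] ℝ)
    {C c : ℝ} (hc : 0 < c) (hbdd : ∀ v w, |a v w| ≤ C * ‖v‖ * ‖w‖)
    (hcoer : ∀ v, c * ‖v‖ ^ 2 ≤ a v v) (K : Submodule ℝ V) [CompleteSpace K] :
    IsCompl (K.orthogonalBilin a.flip) K := by
  have hB : IsCoercive (a.mkContinuous₂ C hbdd) :=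
    ⟨c, hc, fun v => by simpa [sq, mul_assoc] using hcoer v⟩
  have hanisotropic : ∀ v, a v v = 0 → v = 0 := fun v hv => by
    have hle : c * ‖v‖ ^ 2 ≤ 0 := hv ▸ hcoer v
    exact norm_eq_zero.1 <| pow_eq_zero_iff two_ne_zero |>.1 <|
      le_antisymm (nonpos_of_mul_nonpos_right hle hc) (sq_nonneg _)
  refine ⟨Submodule.disjoint_orthogonalBilin_flip hanisotropic K, ?_⟩
  refine codisjoint_iff.2 (Submodule.eq_top_iff'.2 fun v => ?_)
  obtain ⟨w, hwK, hw⟩ := hB.exists_mem_forall_apply_sub_eq_zero K v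
  rw [← sub_add_cancel v w]
  exact Submodule.add_mem_sup hw hwK

end LaxMilgram

theorem stmt_1_general {V : Type*} [NormedAddCommGroup V] [InnerProductSpace ℝ V] [CompleteSpace V]
    (a : V →ₗ[ℝ] V →ₗ[ℝ] ℝ) (C_a c_a : ℝ) (hca : 0 < c_a)
    (ha_bdd : ∀ v w : V, |a v w| ≤ C_a * ‖v‖ * ‖w‖)
    (ha_coer : ∀ v : V, c_a * ‖v‖ ^ 2 ≤ a v v)
    (N : ℕ) (q : V →L[ℝ] EuclideanSpace ℝ (Fin N)) (hq : Function.Surjective q)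
    (W : Set V) (hW : W = {w : V | q w = 0})
    (Vt : Set V) (hVt : Vt = {v : V | ∀ w ∈ W, a v w = 0}) :
    Set.BijOn (⇑q) Vt Set.univ ∧
    (∀ i : Fin N, ∃! x : V, x ∈ Vt ∧ q x = EuclideanSpace.single i (1 : ℝ)) ∧
    (∀ φ : Fin N → V,
      (∀ i : Fin N, φ i ∈ Vt ∧ q (φ i) = EuclideanSpace.single i (1 : ℝ)) →
      LinearIndependent ℝ φ ∧ ∀ v ∈ Vt, v = ∑ i : Fin N, q v i • φ i) := by
  let qₗ : V →ₗ[ℝ] EuclideanSpace ℝ (Fin N) := q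
  let e := (EuclideanSpace.basisFun (Fin N) ℝ).toBasis
  have : CompleteSpace (ker qₗ) := q.isClosed_ker.completeSpace_coe
  obtain rfl : Vt = (ker qₗ).orthogonalBilin a.flip := by subst hW hVt; rfl
  have hbij := bijOn_of_isCompl_ker (f := qₗ) hq
    (isCompl_orthogonalBilin_flip_of_bounded_of_coercive a hca ha_bdd ha_coer (ker qₗ))
  refine ⟨hbij, fun i => ?_, fun φ hφ => ?_⟩
  · obtain ⟨x, hx, hqx⟩ := hbij.surjOn (mem_univ (EuclideanSpace.single i (1 : ℝ)))
    exact ⟨x, ⟨hx, hqx⟩, fun y ⟨hy, hqy⟩ => hbij.injOn hy hx (hqy.trans hqx.symm)⟩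
  have hqφ : ∀ i, qₗ (φ i) = e i := fun i => by simp [qₗ, e, (hφ i).2]
  refine ⟨.of_comp qₗ ?_, fun v hv => ?_⟩
  · rw [show qₗ ∘ φ = e from funext hqφ]
    exact e.linearIndependent
  · exact eq_sum_repr_smul_of_injOn hbij.injOn e (fun i => (hφ i).1) hqφ hv

/-- Prototypical basis (Lemma 3.1, abstract form): the quantities of interest `q`
restricted to the `a`-orthogonal complement `Ṽ` of the fine-scale space `W = ker q`
form a bijection onto `ℝ^N`; for each `i` there is a unique `φᵢ ∈ Ṽ` with
`q φᵢ = eᵢ`, the family `(φᵢ)` is linearly independent (hence a basis of `Ṽ`),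
and every `v ∈ Ṽ` satisfies `v = ∑ i, qᵢ(v) • φᵢ`. -/
theorem stmt_1 {V : Type*} [NormedAddCommGroup V] [InnerProductSpace ℝ V] [CompleteSpace V]
    (a : V →ₗ[ℝ] V →ₗ[ℝ] ℝ) (C_a c_a : ℝ) (hCa : 0 < C_a) (hca : 0 < c_a)
    (ha_bdd : ∀ v w : V, |a v w| ≤ C_a * ‖v‖ * ‖w‖)
    (ha_coer : ∀ v : V, c_a * ‖v‖ ^ 2 ≤ a v v)
    (N : ℕ) (q : V →L[ℝ] EuclideanSpace ℝ (Fin N)) (hq : Function.Surjective q)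
    (W : Set V) (hW : W = {w : V | q w = 0})
    (Vt : Set V) (hVt : Vt = {v : V | ∀ w ∈ W, a v w = 0}) :
    Set.BijOn (⇑q) Vt Set.univ ∧
    (∀ i : Fin N, ∃! x : V, x ∈ Vt ∧ q x = EuclideanSpace.single i (1 : ℝ)) ∧
    (∀ φ : Fin N → V,
      (∀ i : Fin N, φ i ∈ Vt ∧ q (φ i) = EuclideanSpace.single i (1 : ℝ)) →
      LinearIndependent ℝ φ ∧ ∀ v ∈ Vt, v = ∑ i : Fin N, q v i • φ i) :=
  stmt_1_general a C_a c_a hca ha_bdd ha_coer N q hq W hW Vt hVt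
end

section
/- Let V be a real Hilbert space, a : V × V → ℝ a symmetric bounded coercive bilinear form with coercivity constant c_a, W a closed subspace of V, and Ṽ := {v ∈ V : a(v,w) = 0 for all w ∈ W}. Let F : V → ℝ be a continuous linear functional, u ∈ V with a(u,v) = F(v) for all v ∈ V, and ũ ∈ Ṽ with a(ũ, ṽ) = F(ṽ) for all ṽ ∈ Ṽ. Then c_a ‖u − ũ‖² ≤ a(u − ũ, u − ũ) = F(u − ũ). Consequently, if ε ≥ 0 is such that |F(w)| ≤ ε ‖w‖ for all w ∈ W, then ‖u − ũ‖ ≤ ε / c_a. -/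
/-!
Write `e := u - uH`. Galerkin orthogonality gives `a e v = 0` for every `v ∈ Ṽ`, i.e. `e` lies in
the a-orthogonal complement of `Ṽ`. For closed `W` that complement is `W` itself: by Lax–Milgram
on `W`, `e` has an a-projection `p ∈ W` with `e - p ∈ Ṽ`, and then symmetry gives
`a (e - p) (e - p) = 0`, so `e = p` by coercivity. Once `e ∈ W`, the orthogonality `a uH e = 0`
yields `a e e = a u e = F e`, and coercivity turns `c_a ‖e‖² ≤ F e ≤ ε ‖e‖` into the bound.
-/

open ContinuousLinearMap

namespace IsCoercive

variable {V : Type*} [NormedAddCommGroup V] [InnerProductSpace ℝ V] {B : V →L[ℝ] V →L[ℝ] ℝ}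

lemma eq_zero_of_apply_self_eq_zero (hB : IsCoercive B) {v : V} (hv : B v v = 0) : v = 0 := by
  obtain ⟨C, hC, hcoer⟩ := hB
  have hle : C * ‖v‖ * ‖v‖ ≤ 0 := hv ▸ hcoer v
  by_contra hne
  have hpos : 0 < ‖v‖ := norm_pos_iff.mpr hne
  exact (mul_pos (mul_pos hC hpos) hpos).not_ge hle

lemma bilinearComp_subtypeL_s5 (hB : IsCoercive B) (W : Submodule ℝ V) :
    IsCoercive (B.bilinearComp W.subtypeL W.subtypeL) := by
  obtain ⟨C, hC, hcoer⟩ := hB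
  exact ⟨C, hC, fun w => hcoer w⟩

lemma exists_mem_forall_apply_eq (hB : IsCoercive B) (W : Submodule ℝ V) [CompleteSpace W]
    (e : V) : ∃ p ∈ W, ∀ w ∈ W, B p w = B e w := by
  have hBW := hB.bilinearComp_subtypeL_s5 W
  set f : W →L[ℝ] ℝ := (B e).comp W.subtypeL
  set p : W := hBW.continuousLinearEquivOfBilin.symm ((InnerProductSpace.toDual ℝ W).symm f)
  refine ⟨p, p.2, fun w hw => ?_⟩
  calc B p w = B.bilinearComp W.subtypeL W.subtypeL p ⟨w, hw⟩ := rfl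
    _ = inner ℝ (hBW.continuousLinearEquivOfBilin p) ⟨w, hw⟩ :=
        (hBW.continuousLinearEquivOfBilin_apply p ⟨w, hw⟩).symm
    _ = f ⟨w, hw⟩ := by
        rw [ContinuousLinearEquiv.apply_symm_apply, InnerProductSpace.toDual_symm_apply]
    _ = B e w := rfl

lemma mem_of_forall_apply_eq_zero (hB : IsCoercive B) (hsymm : ∀ v w, B v w = B w v)
    (W : Submodule ℝ V) [CompleteSpace W] {e : V}
    (he : ∀ v, (∀ w ∈ W, B v w = 0) → B e v = 0) : e ∈ W := by
  obtain ⟨p, hpW, hp⟩ := hB.exists_mem_forall_apply_eq W e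
  have hperp : ∀ w ∈ W, B (e - p) w = 0 := fun w hw => by
    rw [map_sub B, sub_apply, hp w hw, sub_self]
  have henergy : B (e - p) (e - p) = 0 := by
    rw [map_sub B, sub_apply, he _ hperp, hsymm p, hperp p hpW, sub_zero]
  rwa [sub_eq_zero.mp (hB.eq_zero_of_apply_self_eq_zero henergy)]

end IsCoercive

lemma le_div_of_mul_sq_le_mul {c ε x : ℝ} (hc : 0 < c) (hε : 0 ≤ ε) (hx : 0 ≤ x)
    (h : c * x ^ 2 ≤ ε * x) : x ≤ ε / c := by
  rw [le_div_iff₀ hc]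
  rcases hx.eq_or_lt with rfl | hx
  · simpa using hε
  · nlinarith

theorem stmt_5_general {V : Type*} [NormedAddCommGroup V] [InnerProductSpace ℝ V] [CompleteSpace V]
    (a : V →ₗ[ℝ] V →ₗ[ℝ] ℝ) (C_a c_a : ℝ) (hca : 0 < c_a)
    (ha_bdd : ∀ v w : V, |a v w| ≤ C_a * ‖v‖ * ‖w‖)
    (ha_coer : ∀ v : V, c_a * ‖v‖ ^ 2 ≤ a v v)
    (ha_symm : ∀ v w : V, a v w = a w v)
    (W : Submodule ℝ V) (hWclosed : IsClosed (W : Set V))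
    (Vt : Set V) (hVt : Vt = {v : V | ∀ w ∈ W, a v w = 0})
    (F : V →L[ℝ] ℝ) (u : V) (hu : ∀ v : V, a u v = F v)
    (uH : V) (huHmem : uH ∈ Vt) (huH : ∀ vt ∈ Vt, a uH vt = F vt) :
    c_a * ‖u - uH‖ ^ 2 ≤ a (u - uH) (u - uH) ∧ a (u - uH) (u - uH) = F (u - uH) ∧
      ∀ ε : ℝ, 0 ≤ ε → (∀ w ∈ W, |F w| ≤ ε * ‖w‖) → ‖u - uH‖ ≤ ε / c_a := by
  subst hVt
  have : CompleteSpace W := hWclosed.completeSpace_coe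
  set A : V →L[ℝ] V →L[ℝ] ℝ := LinearMap.mkContinuous₂ a C_a fun v w => ha_bdd v w
  have hA : IsCoercive A := ⟨c_a, hca, fun v => by simpa [A, sq, mul_assoc] using ha_coer v⟩
  have hgalerkin : ∀ v, (∀ w ∈ W, a v w = 0) → a (u - uH) v = 0 := fun v hv => by
    rw [map_sub a, LinearMap.sub_apply, hu, huH v hv, sub_self]
  have herrW : u - uH ∈ W := hA.mem_of_forall_apply_eq_zero ha_symm W hgalerkin
  have henergy : a (u - uH) (u - uH) = F (u - uH) := by
    rw [map_sub a, LinearMap.sub_apply, hu, huHmem _ herrW, sub_zero]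
  refine ⟨ha_coer _, henergy, fun ε hε hFW => le_div_of_mul_sq_le_mul hca hε (norm_nonneg _) ?_⟩
  calc c_a * ‖u - uH‖ ^ 2 ≤ F (u - uH) := henergy ▸ ha_coer _
    _ ≤ |F (u - uH)| := le_abs_self _
    _ ≤ ε * ‖u - uH‖ := hFW _ herrW

/-- Error mechanism (3.14) in the proof of Theorem 3.2: for the prototypical
multiscale method, `c_a ‖u − uH‖² ≤ a(u − uH, u − uH) = F(u − uH)`; consequently, if
`|F w| ≤ ε ‖w‖` for all `w ∈ W`, then `‖u − uH‖ ≤ ε / c_a`. -/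
theorem stmt_5 {V : Type*} [NormedAddCommGroup V] [InnerProductSpace ℝ V] [CompleteSpace V]
    (a : V →ₗ[ℝ] V →ₗ[ℝ] ℝ) (C_a c_a : ℝ) (hCa : 0 < C_a) (hca : 0 < c_a)
    (ha_bdd : ∀ v w : V, |a v w| ≤ C_a * ‖v‖ * ‖w‖)
    (ha_coer : ∀ v : V, c_a * ‖v‖ ^ 2 ≤ a v v)
    (ha_symm : ∀ v w : V, a v w = a w v)
    (W : Submodule ℝ V) (hWclosed : IsClosed (W : Set V))
    (Vt : Set V) (hVt : Vt = {v : V | ∀ w ∈ W, a v w = 0})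
    (F : V →L[ℝ] ℝ) (u : V) (hu : ∀ v : V, a u v = F v)
    (uH : V) (huHmem : uH ∈ Vt) (huH : ∀ vt ∈ Vt, a uH vt = F vt) :
    c_a * ‖u - uH‖ ^ 2 ≤ a (u - uH) (u - uH) ∧ a (u - uH) (u - uH) = F (u - uH) ∧
      ∀ ε : ℝ, 0 ≤ ε → (∀ w ∈ W, |F w| ≤ ε * ‖w‖) → ‖u - uH‖ ≤ ε / c_a :=
  stmt_5_general a C_a c_a hca ha_bdd ha_coer ha_symm W hWclosed Vt hVt F u hu uH huHmem huH
end

section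
/- Let d ≥ 1, x₀ ∈ ℝ^d, R > 0, and let v : ℝ^d → ℝ be defined by v(x) = max(0, R − ‖x − x₀‖). Then the inverse inequality ∫_{ℝ^d} ‖Dv(x)‖² dx ≤ ((d+1)(d+2)/2) · R^{−2} · ∫_{ℝ^d} v(x)² dx holds, where Dv(x) denotes the Fréchet derivative of v at x (taken to be 0 at points where v is not differentiable). -/
/-!
The bubble `v = max 0 (R - ‖x - x₀‖)` is 1-Lipschitz and vanishes off the closed ball `B`, so
`‖Dv‖ ≤ 1` everywhere and `Dv = 0` off `B`, whence `∫ ‖Dv‖² ≤ |B|`. In polar coordinates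
`∫ v² = d ω_d ∫₀^R r^(d-1) (R - r)² dr = 2 R² |B| / ((d + 1) (d + 2))`, so the constant
`(d + 1) (d + 2) / 2` makes the right-hand side exactly `|B|`.
-/

open MeasureTheory Metric Set Module
open scoped NNReal ENNReal

section Bubble

variable {E : Type*} [NormedAddCommGroup E]

def bubble (x₀ : E) (R : ℝ) (x : E) : ℝ := max 0 (R - ‖x - x₀‖)

lemma lipschitzWith_bubble (x₀ : E) (R : ℝ) : LipschitzWith 1 (bubble x₀ R) := by
  have hdist : LipschitzWith 1 fun x : E => ‖x - x₀‖ := by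
    simpa [dist_eq_norm] using LipschitzWith.dist_left x₀
  unfold bubble
  simpa using ((IsometryEquiv.subLeft R).isometry.lipschitz.comp hdist).const_max 0

lemma tsupport_bubble_subset (x₀ : E) (R : ℝ) : tsupport (bubble x₀ R) ⊆ closedBall x₀ R := by
  refine closure_minimal (fun x hx => ?_) isClosed_closedBall
  by_contra hout
  rw [mem_closedBall, dist_eq_norm, not_le] at hout
  exact hx (max_eq_left (by linarith))

end Bubble

theorem integral_norm_fderiv_sq_le_of_lipschitzWith {E F : Type*} [NormedAddCommGroup E]
    [NormedSpace ℝ E] [MeasurableSpace E] [NormedAddCommGroup F] [NormedSpace ℝ F]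
    {μ : Measure E} {f : E → F} {K : ℝ≥0} {s : Set E} (hf : LipschitzWith K f)
    (hfs : tsupport f ⊆ s) (hs : MeasurableSet s) (hμs : μ s ≠ ∞) :
    ∫ x, ‖fderiv ℝ f x‖ ^ 2 ∂μ ≤ K ^ 2 * μ.real s := by
  have hpointwise : ∀ x, ‖fderiv ℝ f x‖ ^ 2 ≤ s.indicator (fun _ => (K : ℝ) ^ 2) x := by
    intro x
    by_cases hx : x ∈ s
    · rw [indicator_of_mem hx]
      exact pow_le_pow_left₀ (norm_nonneg _) (norm_fderiv_le_of_lipschitz ℝ hf) 2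
    · have hzero : fderiv ℝ f x = 0 :=
        Function.notMem_support.1 fun h => hx (hfs (support_fderiv_subset ℝ h))
      simp [indicator_of_notMem hx, hzero]
  calc ∫ x, ‖fderiv ℝ f x‖ ^ 2 ∂μ ≤ ∫ x, s.indicator (fun _ => (K : ℝ) ^ 2) x ∂μ :=
        integral_mono_of_nonneg (.of_forall fun _ => by positivity)
          ((integrable_indicator_iff hs).2 (integrableOn_const hμs)) (.of_forall hpointwise)
    _ = K ^ 2 * μ.real s := by rw [integral_indicator_const _ hs, smul_eq_mul, mul_comm]

theorem integral_pow_mul_sub_sq (n : ℕ) (R : ℝ) :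
    ∫ y in (0)..R, y ^ n * (R - y) ^ 2 = 2 * R ^ (n + 3) / ((n + 1) * (n + 2) * (n + 3)) := by
  have hexpand : ∀ y : ℝ,
      y ^ n * (R - y) ^ 2 = R ^ 2 * y ^ n - 2 * R * y ^ (n + 1) + y ^ (n + 2) :=
    fun y => by ring
  have hpow : ∀ k : ℕ, IntervalIntegrable (fun y : ℝ => y ^ k) volume 0 R :=
    fun k => intervalIntegral.intervalIntegrable_pow k
  simp only [hexpand]
  rw [intervalIntegral.integral_add (((hpow n).const_mul _).sub ((hpow _).const_mul _)) (hpow _),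
    intervalIntegral.integral_sub ((hpow n).const_mul _) ((hpow _).const_mul _)]
  simp only [intervalIntegral.integral_const_mul, integral_pow]
  push_cast
  field_simp
  ring

theorem integral_Ioi_pow_mul_max_zero_sub_sq (n : ℕ) {R : ℝ} (hR : 0 ≤ R) :
    ∫ y in Ioi (0 : ℝ), y ^ n * max 0 (R - y) ^ 2 =
      2 * R ^ (n + 3) / ((n + 1) * (n + 2) * (n + 3)) := by
  rw [← integral_pow_mul_sub_sq, intervalIntegral.integral_of_le hR,
    setIntegral_eq_of_subset_of_forall_sdiff_eq_zero measurableSet_Ioi Ioc_subset_Ioi_self]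
  · refine setIntegral_congr_fun measurableSet_Ioc fun y hy => ?_
    rw [max_eq_right (by linarith [hy.2])]
  · rintro y ⟨hy, hy'⟩
    have hRy : R < y := by simpa [mem_Ioc, mem_Ioi.1 hy] using hy'
    simp [max_eq_left (sub_nonpos.2 hRy.le)]

theorem integral_bubble_sq {E : Type*} [NormedAddCommGroup E] [NormedSpace ℝ E] [Nontrivial E]
    [FiniteDimensional ℝ E] [MeasurableSpace E] [BorelSpace E] (μ : Measure E)
    [μ.IsAddHaarMeasure] (x₀ : E) {R : ℝ} (hR : 0 ≤ R) :
    ∫ x, bubble x₀ R x ^ 2 ∂μ =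
      2 * R ^ 2 / ((finrank ℝ E + 1) * (finrank ℝ E + 2)) * μ.real (closedBall x₀ R) := by
  obtain ⟨k, hk⟩ : ∃ k, finrank ℝ E = k + 1 := Nat.exists_eq_add_one.2 finrank_pos
  have hcentered : ∫ x, bubble x₀ R x ^ 2 ∂μ = ∫ x, (fun r : ℝ => max 0 (R - r) ^ 2) ‖x‖ ∂μ :=
    integral_sub_right_eq_self (fun x => max 0 (R - ‖x‖) ^ 2) x₀
  rw [hcentered, integral_fun_norm_addHaar μ (fun r => max 0 (R - r) ^ 2),
    Measure.addHaar_real_closedBall μ x₀ hR, hk, Nat.add_sub_cancel]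
  simp only [smul_eq_mul, nsmul_eq_mul, integral_Ioi_pow_mul_max_zero_sub_sq k hR]
  push_cast
  field_simp
  ring

/-- Inverse inequality (3.8) realized for the bubble functions of Section 7: with
`v(x) = max(0, R − ‖x − x₀‖)` and `Dv` its Fréchet derivative (zero where `v` is
not differentiable), `∫ ‖Dv‖² ≤ ((d+1)(d+2)/2) R⁻² ∫ v²`. -/
theorem stmt_13 (d : ℕ) (hd : 1 ≤ d) (x₀ : EuclideanSpace ℝ (Fin d)) (R : ℝ) (hR : 0 < R)
    (v : EuclideanSpace ℝ (Fin d) → ℝ) (hv : v = fun x => max 0 (R - ‖x - x₀‖)) :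
    ∫ x : EuclideanSpace ℝ (Fin d), ‖fderiv ℝ v x‖ ^ 2 ≤
      (((d : ℝ) + 1) * ((d : ℝ) + 2) / 2) * (R ^ 2)⁻¹ *
        ∫ x : EuclideanSpace ℝ (Fin d), v x ^ 2 := by
  replace hv : v = bubble x₀ R := hv
  subst hv
  have : Nonempty (Fin d) := ⟨⟨0, hd⟩⟩
  calc ∫ x, ‖fderiv ℝ (bubble x₀ R) x‖ ^ 2 ≤ (1 : ℝ≥0) ^ 2 * volume.real (closedBall x₀ R) :=
        integral_norm_fderiv_sq_le_of_lipschitzWith (lipschitzWith_bubble x₀ R)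
          (tsupport_bubble_subset x₀ R) measurableSet_closedBall measure_closedBall_lt_top.ne
    _ = _ := by
      rw [NNReal.coe_one, one_pow, one_mul, integral_bubble_sq volume x₀ hR.le,
        finrank_euclideanSpace_fin]
      field_simp
end
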